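/- arXiv:1211.3571 — 3 statements merged into one kernel-verified Lean document; each statement's English description precedes it below -/
import Mathlib

section
/- Let H be a real Hilbert space and R a subset of H with ‖r‖ ≤ 1 for all r ∈ R. Fix k ≥ 1. For every a in the closed unit ball of H there exists an element s of the form s = λ₁r₁ + ⋯ + λ_j r_j with j ≤ k, r_i ∈ R, λ_i ∈ [-1,1], such that sup_{r ∈ R} |⟨r, a - s⟩| ≤ 1/√k. -/
open scoped RealInnerProductSpace

theorem stmt0 {H : Type*} [NormedAddCommGroup H] [InnerProductSpace ℝ H] [CompleteSpace H]
    (R : Set H) (hR : ∀ r ∈ R, ‖r‖ ≤ 1) (k : ℕ) (hk : 1 ≤ k)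
    (a : H) (ha : ‖a‖ ≤ 1) :
    ∃ (j : ℕ) (_ : j ≤ k) (r : Fin j → H) (lam : Fin j → ℝ),
      (∀ i, r i ∈ R) ∧ (∀ i, lam i ∈ Set.Icc (-1 : ℝ) 1) ∧
      ∀ s ∈ R, |⟪s, a - ∑ i, lam i • r i⟫| ≤ 1 / Real.sqrt k := by
  have hk0 : (0:ℝ) < k := by exact_mod_cast hk
  have hsk : (0:ℝ) < Real.sqrt k := Real.sqrt_pos.2 hk0
  by_cases hRe : R = ∅
  · exact ⟨0, Nat.zero_le k, Fin.elim0, Fin.elim0, fun i => i.elim0, fun i => i.elim0,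
      by simp [hRe]⟩
  obtain ⟨r₀, hr₀⟩ := Set.nonempty_iff_ne_empty.2 hRe
  have key : ∀ j : ℕ, j ≤ k → ∃ (r : Fin j → H) (lam : Fin j → ℝ),
      (∀ i, r i ∈ R) ∧ (∀ i, lam i ∈ Set.Icc (-1:ℝ) 1) ∧
      ((∀ s ∈ R, |⟪s, a - ∑ i, lam i • r i⟫| ≤ 1 / Real.sqrt k) ∨
        ‖a - ∑ i, lam i • r i‖^2 ≤ 1 - j / k) := by
    intro j
    induction j with
    | zero =>
      intro _
      refine ⟨Fin.elim0, Fin.elim0, fun i => i.elim0, fun i => i.elim0, Or.inr ?_⟩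
      simp only [Finset.univ_eq_empty, Finset.sum_empty, sub_zero, Nat.cast_zero, zero_div]
      nlinarith [norm_nonneg a]
    | succ j ih =>
      intro hj1
      obtain ⟨r, lam, hrR, hlam, hcase⟩ := ih (Nat.le_of_succ_le hj1)
      set s := ∑ i, lam i • r i with hs
      have hsnoc : ∀ (rn : H) (c : ℝ),
          ∑ i : Fin (j+1), (Fin.snoc lam c : Fin (j+1) → ℝ) i • (Fin.snoc r rn : Fin (j+1) → H) i
            = s + c • rn := by
        intro rn c
        rw [Fin.sum_univ_castSucc]
        simp [hs]
      have hext0 : ∀ i : Fin (j+1), (Fin.snoc r r₀ : Fin (j+1) → H) i ∈ R := by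
        intro i
        refine Fin.lastCases ?_ ?_ i
        · simp [hr₀]
        · intro i; simp [hrR i]
      have hextlam0 : ∀ i : Fin (j+1), (Fin.snoc lam (0:ℝ) : Fin (j+1) → ℝ) i ∈ Set.Icc (-1:ℝ) 1 := by
        intro i
        refine Fin.lastCases ?_ ?_ i
        · simp
        · intro i; simp [hlam i]
      rcases hcase with hdone | hnorm
      · refine ⟨Fin.snoc r r₀, Fin.snoc lam 0, hext0, hextlam0, Or.inl ?_⟩
        rw [hsnoc]
        simpa using hdone
      · by_cases hall : ∀ t ∈ R, |⟪t, a - s⟫| ≤ 1 / Real.sqrt k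
        · refine ⟨Fin.snoc r r₀, Fin.snoc lam 0, hext0, hextlam0, Or.inl ?_⟩
          rw [hsnoc]
          simpa using hall
        · push_neg at hall
          obtain ⟨rn, hrnR, hrn⟩ := hall
          set x := a - s with hx
          set c := ⟪rn, x⟫ with hc
          have hjk : (j:ℝ)/k ≤ 1 := by
            rw [div_le_one hk0]
            exact_mod_cast Nat.le_of_succ_le hj1
          have hjk0 : (0:ℝ) ≤ (j:ℝ)/k := by positivity
          have hx1 : ‖x‖ ≤ 1 := by nlinarith [norm_nonneg x, hnorm, hjk0]
          have hrn1 : ‖rn‖ ≤ 1 := hR rn hrnR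
          have hcabs : |c| ≤ 1 := by
            calc |c| ≤ ‖rn‖ * ‖x‖ := abs_real_inner_le_norm rn x
            _ ≤ 1 := by nlinarith [norm_nonneg rn, norm_nonneg x]
          have hc2 : 1/(k:ℝ) < c^2 := by
            have h1 : (1 / Real.sqrt k)^2 < |c|^2 := by
              apply pow_lt_pow_left₀ hrn (by positivity)
              norm_num
            have h2 : (1 / Real.sqrt k)^2 = 1 / (k:ℝ) := by
              rw [div_pow, one_pow, Real.sq_sqrt hk0.le]
            rw [h2, sq_abs] at h1
            exact h1
          have hnormnew : ‖x - c • rn‖^2 ≤ ‖x‖^2 - c^2 := by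
            have hxr : (⟪x, rn⟫ : ℝ) = c := by rw [real_inner_comm]
            have hexp : ‖x - c • rn‖^2 = ‖x‖^2 - 2 * c * c + c^2 * ‖rn‖^2 := by
              rw [norm_sub_sq_real, real_inner_smul_right, hxr, norm_smul, mul_pow,
                Real.norm_eq_abs, sq_abs]
              ring
            have hrn2 : ‖rn‖^2 ≤ 1 := by nlinarith [norm_nonneg rn]
            nlinarith [sq_nonneg c, hrn2]
          refine ⟨Fin.snoc r rn, Fin.snoc lam c, ?_, ?_, Or.inr ?_⟩
          · intro i
            refine Fin.lastCases ?_ ?_ i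
            · simp [hrnR]
            · intro i; simp [hrR i]
          · intro i
            refine Fin.lastCases ?_ ?_ i
            · simpa using abs_le.1 hcabs
            · intro i; simp [hlam i]
          · rw [hsnoc, show a - (s + c • rn) = x - c • rn by rw [hx]; abel]
            have : ((j:ℝ)+1)/k = (j:ℝ)/k + 1/k := by ring
            push_cast
            rw [this]
            nlinarith
  obtain ⟨r, lam, hrR, hlam, hcase⟩ := key k le_rfl
  refine ⟨k, le_rfl, r, lam, hrR, hlam, ?_⟩
  rcases hcase with hdone | hnorm
  · exact hdone
  · have h0 : a - ∑ i, lam i • r i = 0 := by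
      have : ‖a - ∑ i, lam i • r i‖^2 ≤ 0 := by
        rw [div_self hk0.ne'] at hnorm; linarith
      have := pow_eq_zero_iff (n := 2) (by norm_num) |>.1
        (le_antisymm this (by positivity))
      simpa [norm_eq_zero] using this
    intro t ht
    rw [h0, inner_zero_right]
    simp [hsk.le, le_div_iff₀ hsk]
end

section
/- Let H be a real Hilbert space, R a bounded subset of H, and d_R(x,y) = sup_{r∈R}|⟨r,x−y⟩|. Then the closed unit ball B(H) equipped with the pseudometric d_R is a complete pseudometric space: every d_R-Cauchy sequence in B(H) d_R-converges to an element of B(H). -/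
/-!
The functional `v ↦ lim ⟪v, x n⟫`, defined on the subspace where these limits exist, is bounded by
`sup ‖x n‖`; extending it by Hahn–Banach and representing it by Riesz gives a single vector `a` of
norm at most `sup ‖x n‖` that is the weak limit of `x` along every direction in which one exists.
For a `d_R`-Cauchy sequence every `r ∈ R` is such a direction, and `d_R(x m, a) ≤ ε` follows by
letting `n → ∞` in `|⟪r, x m - x n⟫| ≤ ε`.
-/

open scoped RealInnerProductSpace

noncomputable def dR {H : Type*} [NormedAddCommGroup H] [InnerProductSpace ℝ H]
    (R : Set H) (x y : H) : ℝ :=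
  ⨆ r : R, |⟪(r : H), x - y⟫|

open Filter Topology

section InnerLimit

variable {H : Type*} [NormedAddCommGroup H] [InnerProductSpace ℝ H]

def convergentInnerSubmodule (x : ℕ → H) : Submodule ℝ H where
  carrier := {v | ∃ l, Tendsto (fun n => ⟪v, x n⟫) atTop (𝓝 l)}
  add_mem' := by
    rintro u v ⟨l, hl⟩ ⟨k, hk⟩
    exact ⟨l + k, by simpa only [inner_add_left] using hl.add hk⟩
  zero_mem' := ⟨0, by simpa only [inner_zero_left] using tendsto_const_nhds⟩
  smul_mem' := by
    rintro c v ⟨l, hl⟩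
    exact ⟨c * l, by simpa only [real_inner_smul_left] using hl.const_mul c⟩

variable {x : ℕ → H}

theorem tendsto_inner_limUnder (v : convergentInnerSubmodule x) :
    Tendsto (fun n => ⟪(v : H), x n⟫) atTop (𝓝 (limUnder atTop fun n => ⟪(v : H), x n⟫)) :=
  tendsto_nhds_limUnder v.2

variable (x) in
noncomputable def innerLimit : convergentInnerSubmodule x →ₗ[ℝ] ℝ where
  toFun v := limUnder atTop fun n => ⟪(v : H), x n⟫
  map_add' u v := tendsto_nhds_unique (tendsto_inner_limUnder (u + v)) <| by
    simpa only [Submodule.coe_add, inner_add_left] using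
      (tendsto_inner_limUnder u).add (tendsto_inner_limUnder v)
  map_smul' c v := tendsto_nhds_unique (tendsto_inner_limUnder (c • v)) <| by
    simpa only [Submodule.coe_smul, real_inner_smul_left, RingHom.id_apply, smul_eq_mul] using
      (tendsto_inner_limUnder v).const_mul c

theorem tendsto_inner_innerLimit (v : convergentInnerSubmodule x) :
    Tendsto (fun n => ⟪(v : H), x n⟫) atTop (𝓝 (innerLimit x v)) :=
  tendsto_inner_limUnder v

theorem norm_innerLimit_le {C : ℝ} (hx : ∀ n, ‖x n‖ ≤ C) (v : convergentInnerSubmodule x) :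
    ‖innerLimit x v‖ ≤ C * ‖v‖ :=
  le_of_tendsto (tendsto_inner_innerLimit v).norm <| Eventually.of_forall fun n =>
    calc ‖⟪(v : H), x n⟫‖ ≤ ‖(v : H)‖ * ‖x n‖ := norm_inner_le_norm _ _
      _ ≤ C * ‖v‖ := by rw [mul_comm]; exact mul_le_mul_of_nonneg_right (hx n) (norm_nonneg _)

theorem exists_tendsto_inner_of_norm_le [CompleteSpace H] {C : ℝ} (hx : ∀ n, ‖x n‖ ≤ C) :
    ∃ a : H, ‖a‖ ≤ C ∧
      ∀ v l, Tendsto (fun n => ⟪v, x n⟫) atTop (𝓝 l) →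
        Tendsto (fun n => ⟪v, x n⟫) atTop (𝓝 ⟪v, a⟫) := by
  have hC : 0 ≤ C := (norm_nonneg _).trans (hx 0)
  obtain ⟨g, hg, hg_norm⟩ := exists_extension_norm_eq (convergentInnerSubmodule x)
    ((innerLimit x).mkContinuous C (norm_innerLimit_le hx))
  refine ⟨(InnerProductSpace.toDual ℝ H).symm g, ?_, fun v l hl => ?_⟩
  · rw [LinearIsometryEquiv.norm_map, hg_norm]
    exact LinearMap.mkContinuous_norm_le _ hC (norm_innerLimit_le hx)
  · rw [real_inner_comm, InnerProductSpace.toDual_symm_apply]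
    exact hg ⟨v, l, hl⟩ ▸ tendsto_inner_innerLimit ⟨v, l, hl⟩

end InnerLimit

section dR

variable {H : Type*} [NormedAddCommGroup H] [InnerProductSpace ℝ H] {R : Set H}

theorem dR_nonneg (y z : H) : 0 ≤ dR R y z :=
  Real.iSup_nonneg fun _ => abs_nonneg _

theorem dR_le {y z : H} {c : ℝ} (hc : 0 ≤ c) (h : ∀ r ∈ R, |⟪r, y - z⟫| ≤ c) : dR R y z ≤ c :=
  Real.iSup_le (fun r => h r r.2) hc

theorem abs_inner_le_dR (hR : Bornology.IsBounded R) {r : H} (hr : r ∈ R) (y z : H) :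
    |⟪r, y - z⟫| ≤ dR R y z := by
  obtain ⟨C, hC⟩ := hR.exists_norm_le
  refine le_ciSup (f := fun s : R => |⟪(s : H), y - z⟫|) ⟨C * ‖y - z‖, ?_⟩ ⟨r, hr⟩
  rintro _ ⟨s, rfl⟩
  exact (abs_real_inner_le_norm _ _).trans <|
    mul_le_mul_of_nonneg_right (hC s s.2) (norm_nonneg _)

theorem cauchySeq_inner_of_dR (hR : Bornology.IsBounded R) {x : ℕ → H}
    (hx : ∀ ε > (0 : ℝ), ∃ N, ∀ m ≥ N, ∀ n ≥ N, dR R (x m) (x n) < ε) {r : H} (hr : r ∈ R) :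
    CauchySeq fun n => ⟪r, x n⟫ := by
  refine Metric.cauchySeq_iff.2 fun ε hε => ?_
  obtain ⟨N, hN⟩ := hx ε hε
  refine ⟨N, fun m hm n hn => ?_⟩
  rw [Real.dist_eq, ← inner_sub_right]
  exact (abs_inner_le_dR hR hr _ _).trans_lt (hN m hm n hn)

theorem dR_le_of_tendsto_inner (hR : Bornology.IsBounded R) {x : ℕ → H} {a y : H} {c : ℝ}
    (hxa : ∀ r ∈ R, Tendsto (fun n => ⟪r, x n⟫) atTop (𝓝 ⟪r, a⟫)) (hc : 0 ≤ c)
    (h : ∀ᶠ n in atTop, dR R y (x n) ≤ c) : dR R y a ≤ c := by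
  refine dR_le hc fun r hr => ?_
  rw [inner_sub_right]
  refine le_of_tendsto ((hxa r hr).const_sub ⟪r, y⟫).abs ?_
  filter_upwards [h] with n hn
  rw [← inner_sub_right]
  exact (abs_inner_le_dR hR hr _ _).trans hn

end dR

theorem stmt9 {H : Type*} [NormedAddCommGroup H] [InnerProductSpace ℝ H] [CompleteSpace H]
    (R : Set H) (hR : Bornology.IsBounded R)
    (x : ℕ → H) (hx : ∀ n, ‖x n‖ ≤ 1)
    (hcauchy : ∀ ε > (0 : ℝ), ∃ N, ∀ m ≥ N, ∀ n ≥ N, dR R (x m) (x n) < ε) :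
    ∃ a : H, ‖a‖ ≤ 1 ∧
      Filter.Tendsto (fun n => dR R (x n) a) Filter.atTop (nhds 0) := by
  obtain ⟨a, ha, hxa⟩ := exists_tendsto_inner_of_norm_le hx
  have hlim : ∀ r ∈ R, Tendsto (fun n => ⟪r, x n⟫) atTop (𝓝 ⟪r, a⟫) := fun r hr =>
    have ⟨l, hl⟩ := cauchySeq_tendsto_of_complete (cauchySeq_inner_of_dR hR hcauchy hr)
    hxa r l hl
  refine ⟨a, ha, Metric.tendsto_atTop.2 fun ε hε => ?_⟩
  obtain ⟨N, hN⟩ := hcauchy (ε / 2) (half_pos hε)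
  refine ⟨N, fun m hm => ?_⟩
  have hm_le : dR R (x m) a ≤ ε / 2 := dR_le_of_tendsto_inner hR hlim (half_pos hε).le <|
    eventually_atTop.2 ⟨N, fun n hn => (hN m hm n hn).le⟩
  rw [Real.dist_0_eq_abs, abs_of_nonneg (dR_nonneg _ _)]
  linarith
end

section
/- Let Π be the lattice of partitions of [0,1] into finitely many sets each a finite union of intervals, ordered by refinement, and for P ∈ Π let L_P be the linear span of the indicator functions of products I×J with I,J ∈ P (inside L²([0,1]²)), with x_P the orthogonal projection of x onto L_P. For every ε > 0 and every rectangle x = 1_{A×B} (A, B finite unions of intervals), and every N ∈ Π, there exists P ∈ Π with P coarser than or equal to N, |P| ≤ (1+2/ε)², and ‖x_N − x_P‖ < ε. -/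
open MeasureTheory Set Classical
open scoped RealInnerProductSpace

/-- The indicator function of a set `S ⊆ ℝ²` as an element of `L²(ℝ²)`
(defined to be `0` if `S` is not measurable of finite measure). -/
noncomputable def ind (S : Set (ℝ × ℝ)) : Lp ℝ 2 (volume : Measure (ℝ × ℝ)) :=
  if h : MeasurableSet S ∧ volume S ≠ ⊤ then indicatorConstLp 2 h.1 h.2 (1 : ℝ) else 0

/-- A finite union of intervals of `ℝ`. -/
def FinUnionIntervals (S : Set ℝ) : Prop :=
  ∃ F : Finset (Set ℝ), (∀ I ∈ F, I.OrdConnected) ∧ S = ⋃ I ∈ F, I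

/-- A partition of `[0,1]` into finitely many classes, each a finite union of intervals. -/
def IsIntervalPartition (P : Finset (Set ℝ)) : Prop :=
  (∀ S ∈ P, FinUnionIntervals S) ∧ (↑P : Set (Set ℝ)).PairwiseDisjoint id ∧
    (⋃ S ∈ P, S) = Icc (0 : ℝ) 1

/-- The subspace `L_P` of `L²([0,1]²)`, spanned by indicators of products of classes. -/
noncomputable def LP (P : Finset (Set ℝ)) :
    Submodule ℝ (Lp ℝ 2 (volume : Measure (ℝ × ℝ))) :=
  Submodule.span ℝ {f | ∃ I ∈ P, ∃ J ∈ P, f = ind (I ×ˢ J)}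

/-- `y` is the orthogonal projection of `x` onto the subspace `L`. -/
def IsProj (L : Submodule ℝ (Lp ℝ 2 (volume : Measure (ℝ × ℝ))))
    (x y : Lp ℝ 2 (volume : Measure (ℝ × ℝ))) : Prop :=
  y ∈ L ∧ ∀ w ∈ L, ⟪x - y, w⟫ = 0

/-!
The projection of `1_{A×B}` onto `L_N` is `∑ α_I β_J 1_{I×J}` with `α_I = |A ∩ I| / |I|` and
`β_J = |B ∩ J| / |J|`. Rounding `α` and `β` down to multiples of `ε/2` and merging the classes
of `N` with equal rounded values gives a coarsening `P` with at most `(1 + 2/ε)²` classes, and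
the rounded sum lies in `L_P`. As `L_P ≤ L_N`, `‖x_N - x_P‖` is at most the distance from `x_N`
to the rounded sum; the coefficients of that difference are below `ε` on pairwise orthogonal
indicators whose total mass is `1`.
-/

section Indicator

variable {S T : Set (ℝ × ℝ)}

lemma ind_eq (hS : MeasurableSet S) (hS' : volume S ≠ ⊤) :
    ind S = indicatorConstLp 2 hS hS' (1 : ℝ) :=
  dif_pos ⟨hS, hS'⟩

lemma ind_empty : ind (∅ : Set (ℝ × ℝ)) = 0 := by
  rw [ind_eq MeasurableSet.empty (by simp)]
  exact indicatorConstLp_empty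

lemma inner_ind_ind (hS : MeasurableSet S) (hS' : volume S ≠ ⊤)
    (hT : MeasurableSet T) (hT' : volume T ≠ ⊤) :
    ⟪ind S, ind T⟫ = volume.real (S ∩ T) := by
  rw [ind_eq hS hS', ind_eq hT hT', L2.inner_indicatorConstLp_one hS hS',
    setIntegral_indicatorConstLp hS hT hT', Set.inter_comm]
  simp [measureReal_def]

lemma ind_union (hS : MeasurableSet S) (hS' : volume S ≠ ⊤)
    (hT : MeasurableSet T) (hT' : volume T ≠ ⊤) (hST : Disjoint S T) :
    ind (S ∪ T) = ind S + ind T := by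
  rw [ind_eq hS hS', ind_eq hT hT', ind_eq (hS.union hT) (measure_union_ne_top hS' hT'),
    indicatorConstLp_disjoint_union hS hT hS' hT' hST]

end Indicator

section Family

variable {ι : Type*} {s : Finset ι} {S : ι → Set (ℝ × ℝ)}

lemma ind_biUnion (hm : ∀ i ∈ s, MeasurableSet (S i)) (hf : ∀ i ∈ s, volume (S i) ≠ ⊤)
    (hd : (s : Set ι).PairwiseDisjoint S) :
    ind (⋃ i ∈ s, S i) = ∑ i ∈ s, ind (S i) := by
  classical
  induction s using Finset.induction_on with
  | empty => simp [ind_empty]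
  | insert a s ha ih =>
    simp only [Finset.forall_mem_insert] at hm hf
    rw [Finset.coe_insert, Set.pairwiseDisjoint_insert_of_notMem (by simpa)] at hd
    rw [Finset.set_biUnion_insert, Finset.sum_insert ha, ← ih hm.2 hf.2 hd.1]
    refine ind_union hm.1 hf.1 (s.measurableSet_biUnion hm.2) ?_
      (Set.disjoint_iUnion₂_right.2 hd.2)
    exact (measure_biUnion_finset_le s S).trans_lt
      (ENNReal.sum_lt_top.2 fun i hi => (hf.2 i hi).lt_top) |>.ne

lemma sum_smul_ind_inner_ind (hm : ∀ i ∈ s, MeasurableSet (S i))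
    (hf : ∀ i ∈ s, volume (S i) ≠ ⊤) (hd : (s : Set ι).PairwiseDisjoint S) (c : ι → ℝ)
    {j : ι} (hj : j ∈ s) :
    ⟪∑ i ∈ s, c i • ind (S i), ind (S j)⟫ = c j * volume.real (S j) := by
  rw [sum_inner, Finset.sum_eq_single_of_mem j hj, real_inner_smul_left,
    inner_ind_ind (hm j hj) (hf j hj) (hm j hj) (hf j hj), Set.inter_self]
  intro i hi hij
  rw [real_inner_smul_left, inner_ind_ind (hm i hi) (hf i hi) (hm j hj) (hf j hj),
    Set.disjoint_iff_inter_eq_empty.1 (hd hi hj hij)]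
  simp

lemma norm_sum_smul_ind_sq (hm : ∀ i ∈ s, MeasurableSet (S i))
    (hf : ∀ i ∈ s, volume (S i) ≠ ⊤) (hd : (s : Set ι).PairwiseDisjoint S) (c : ι → ℝ) :
    ‖∑ i ∈ s, c i • ind (S i)‖ ^ 2 = ∑ i ∈ s, c i ^ 2 * volume.real (S i) := by
  rw [← real_inner_self_eq_norm_sq, inner_sum]
  refine Finset.sum_congr rfl fun i hi => ?_
  rw [real_inner_smul_right, sum_smul_ind_inner_ind hm hf hd c hi]
  ring

end Family

section Projection

variable {L L' : Submodule ℝ (Lp ℝ 2 (volume : Measure (ℝ × ℝ)))}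
  {x y y' w : Lp ℝ 2 (volume : Measure (ℝ × ℝ))}

lemma IsProj.norm_sub_le (hL : L' ≤ L) (hy : IsProj L x y) (hy' : IsProj L' x y')
    (hw : w ∈ L') : ‖y - y'‖ ≤ ‖y - w‖ := by
  have horth : ⟪y - y', y' - w⟫ = 0 := by
    have hmem := L'.sub_mem hy'.1 hw
    rw [show y - y' = (x - y') - (x - y) by abel, inner_sub_left, hy'.2 _ hmem,
      hy.2 _ (hL hmem), sub_zero]
  have hpyth := norm_add_sq_eq_norm_sq_add_norm_sq_real horth
  rw [sub_add_sub_cancel] at hpyth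
  exact pow_le_pow_iff_left₀ (norm_nonneg _) (norm_nonneg _) two_ne_zero |>.1
    (by nlinarith [sq_nonneg ‖y' - w‖])

lemma IsProj.unique (hy : IsProj L x y) (hy' : IsProj L x y') : y = y' :=
  sub_eq_zero.1 <| norm_le_zero_iff.1 <| by simpa using hy.norm_sub_le le_rfl hy' hy.1

end Projection

lemma isProj_sum_smul_ind {ι : Type*} {s : Finset ι} {S : ι → Set (ℝ × ℝ)}
    (hm : ∀ i ∈ s, MeasurableSet (S i)) (hf : ∀ i ∈ s, volume (S i) ≠ ⊤)
    (hd : (s : Set ι).PairwiseDisjoint S) {x : Lp ℝ 2 (volume : Measure (ℝ × ℝ))}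
    (c : ι → ℝ) (hx : ∀ i ∈ s, ⟪x, ind (S i)⟫ = c i * volume.real (S i)) :
    IsProj (Submodule.span ℝ ((fun i => ind (S i)) '' s)) x (∑ i ∈ s, c i • ind (S i)) := by
  refine ⟨Submodule.sum_mem _ fun i hi =>
    Submodule.smul_mem _ _ (Submodule.subset_span ⟨i, hi, rfl⟩), fun w hw => ?_⟩
  suffices h : Submodule.span ℝ ((fun i => ind (S i)) '' s) ≤
      (ℝ ∙ (x - ∑ i ∈ s, c i • ind (S i)))ᗮ from
    Submodule.mem_orthogonal_singleton_iff_inner_right.1 (h hw)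
  rw [Submodule.span_le]
  rintro _ ⟨j, hj, rfl⟩
  rw [SetLike.mem_coe, Submodule.mem_orthogonal_singleton_iff_inner_right, inner_sub_left,
    hx j hj, sum_smul_ind_inner_ind hm hf hd c hj, sub_self]

lemma FinUnionIntervals.measurableSet {S : Set ℝ} (h : FinUnionIntervals S) :
    MeasurableSet S := by
  obtain ⟨F, hF, rfl⟩ := h
  exact F.measurableSet_biUnion fun I hI => (hF I hI).measurableSet

lemma FinUnionIntervals.biUnion {t : Finset (Set ℝ)} (h : ∀ S ∈ t, FinUnionIntervals S) :
    FinUnionIntervals (⋃ S ∈ t, S) := by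
  choose! F hF hFS using h
  refine ⟨t.biUnion F, fun I hI => ?_, ?_⟩
  · obtain ⟨S, hS, hIS⟩ := Finset.mem_biUnion.1 hI
    exact hF S hS I hIS
  · rw [Finset.set_biUnion_biUnion]
    exact Set.iUnion₂_congr hFS

lemma measure_prod_ne_top {I J : Set ℝ} (hI : volume I ≠ ⊤) (hJ : volume J ≠ ⊤) :
    volume (I ×ˢ J) ≠ ⊤ := by
  rw [Measure.volume_eq_prod, Measure.prod_prod]
  exact ENNReal.mul_ne_top hI hJ

lemma measureReal_prod (I J : Set ℝ) : volume.real (I ×ˢ J) = volume.real I * volume.real J := by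
  rw [Measure.volume_eq_prod, measureReal_prod_prod]

namespace IsIntervalPartition

variable {N : Finset (Set ℝ)} {I : Set ℝ}

lemma measurableSet (hN : IsIntervalPartition N) (hI : I ∈ N) : MeasurableSet I :=
  (hN.1 I hI).measurableSet

lemma subset_Icc (hN : IsIntervalPartition N) (hI : I ∈ N) : I ⊆ Icc 0 1 :=
  hN.2.2 ▸ Set.subset_biUnion_of_mem (u := id) hI

lemma measure_ne_top (hN : IsIntervalPartition N) (hI : I ∈ N) : volume I ≠ ⊤ :=
  measure_ne_top_of_subset (hN.subset_Icc hI) (by simp)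

lemma sum_measureReal (hN : IsIntervalPartition N) : ∑ I ∈ N, volume.real I = 1 := by
  have h : volume.real (⋃ I ∈ N, I) = ∑ I ∈ N, volume.real I :=
    measureReal_biUnion_finset hN.2.1 (fun _ => hN.measurableSet) (fun _ => hN.measure_ne_top)
  rw [← h, hN.2.2, Real.volume_real_Icc_of_le zero_le_one, sub_zero]

lemma measurableSet_prod (hN : IsIntervalPartition N) {p : Set ℝ × Set ℝ} (hp : p ∈ N ×ˢ N) :
    MeasurableSet (p.1 ×ˢ p.2) :=
  (hN.measurableSet (Finset.mem_product.1 hp).1).prod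
    (hN.measurableSet (Finset.mem_product.1 hp).2)

lemma measure_prod_ne_top (hN : IsIntervalPartition N) {p : Set ℝ × Set ℝ}
    (hp : p ∈ N ×ˢ N) : volume (p.1 ×ˢ p.2) ≠ ⊤ :=
  _root_.measure_prod_ne_top (hN.measure_ne_top (Finset.mem_product.1 hp).1)
    (hN.measure_ne_top (Finset.mem_product.1 hp).2)

lemma pairwiseDisjoint_prod (hN : IsIntervalPartition N) :
    ((N ×ˢ N : Finset (Set ℝ × Set ℝ)) : Set (Set ℝ × Set ℝ)).PairwiseDisjoint
      fun p => p.1 ×ˢ p.2 := by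
  rw [Finset.coe_product]
  exact hN.2.1.prod hN.2.1

lemma sum_measureReal_prod (hN : IsIntervalPartition N) :
    ∑ p ∈ N ×ˢ N, volume.real (p.1 ×ˢ p.2) = 1 := by
  simp_rw [Finset.sum_product, measureReal_prod, ← Finset.mul_sum, ← Finset.sum_mul,
    hN.sum_measureReal, one_mul]

end IsIntervalPartition

lemma LP_eq_span_image (N : Finset (Set ℝ)) :
    LP N = Submodule.span ℝ ((fun p : Set ℝ × Set ℝ => ind (p.1 ×ˢ p.2)) '' ↑(N ×ˢ N)) := by
  rw [LP]
  congr 1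
  ext f
  simp [eq_comm, and_assoc]

/-- The average of `1_A` over `I`, i.e. the coefficient `α_I` of `x_N`. -/
noncomputable def relMeasure (A I : Set ℝ) : ℝ := volume.real (A ∩ I) / volume.real I

lemma relMeasure_nonneg (A I : Set ℝ) : 0 ≤ relMeasure A I := by
  unfold relMeasure; positivity

lemma relMeasure_le_one (A : Set ℝ) {I : Set ℝ} (hI : volume I ≠ ⊤) : relMeasure A I ≤ 1 :=
  div_le_one_of_le₀ (measureReal_mono Set.inter_subset_right hI) measureReal_nonneg

lemma relMeasure_mul_measureReal (A : Set ℝ) {I : Set ℝ} (hI : volume I ≠ ⊤) :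
    relMeasure A I * volume.real I = volume.real (A ∩ I) := by
  rcases eq_or_ne (volume.real I) 0 with h | h
  · rw [h, mul_zero, measureReal_mono_null Set.inter_subset_right h hI]
  · exact div_mul_cancel₀ _ h

lemma isProj_ind_prod {A B : Set ℝ} (hA : MeasurableSet A) (hA' : volume A ≠ ⊤)
    (hB : MeasurableSet B) (hB' : volume B ≠ ⊤) {N : Finset (Set ℝ)}
    (hN : IsIntervalPartition N) :
    IsProj (LP N) (ind (A ×ˢ B))
      (∑ p ∈ N ×ˢ N, (relMeasure A p.1 * relMeasure B p.2) • ind (p.1 ×ˢ p.2)) := by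
  rw [LP_eq_span_image]
  refine isProj_sum_smul_ind (fun _ => hN.measurableSet_prod) (fun _ => hN.measure_prod_ne_top)
    hN.pairwiseDisjoint_prod _ fun p hp => ?_
  obtain ⟨hI, hJ⟩ := Finset.mem_product.1 hp
  rw [inner_ind_ind (hA.prod hB) (measure_prod_ne_top hA' hB') (hN.measurableSet_prod hp)
      (hN.measure_prod_ne_top hp),
    Set.prod_inter_prod, measureReal_prod, measureReal_prod,
    ← relMeasure_mul_measureReal A (hN.measure_ne_top hI),
    ← relMeasure_mul_measureReal B (hN.measure_ne_top hJ)]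
  ring

section MergeFibers

variable {α κ : Type*} [DecidableEq κ] (N : Finset (Set α)) (r : Set α → κ)

def fiberUnion (v : κ) : Set α := ⋃ I ∈ N.filter (r · = v), I

noncomputable def mergeFibers : Finset (Set α) := (N.image r).image (fiberUnion N r)

variable {N r}

lemma mem_fiberUnion {v : κ} {x : α} : x ∈ fiberUnion N r v ↔ ∃ I ∈ N, r I = v ∧ x ∈ I := by
  simp [fiberUnion, and_assoc]

lemma subset_fiberUnion {I : Set α} (hI : I ∈ N) : I ⊆ fiberUnion N r (r I) :=
  fun _ hx => mem_fiberUnion.2 ⟨I, hI, rfl, hx⟩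

lemma fiberUnion_mem_mergeFibers {I : Set α} (hI : I ∈ N) :
    fiberUnion N r (r I) ∈ mergeFibers N r :=
  Finset.mem_image_of_mem _ (Finset.mem_image_of_mem _ hI)

lemma card_mergeFibers_le : (mergeFibers N r).card ≤ (N.image r).card :=
  Finset.card_image_le

lemma biUnion_mergeFibers : ⋃ S ∈ mergeFibers N r, S = ⋃ I ∈ N, I := by
  refine Set.Subset.antisymm (Set.iUnion₂_subset fun S hS x hx => ?_)
    (Set.iUnion₂_subset fun I hI =>
      (subset_fiberUnion hI).trans (Set.subset_biUnion_of_mem (u := id)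
        (fiberUnion_mem_mergeFibers hI)))
  obtain ⟨v, -, rfl⟩ := Finset.mem_image.1 hS
  obtain ⟨I, hI, -, hxI⟩ := mem_fiberUnion.1 hx
  exact Set.mem_biUnion hI hxI

lemma pairwise_disjoint_fiberUnion (hN : (N : Set (Set α)).PairwiseDisjoint id) :
    Pairwise (Function.onFun Disjoint (fiberUnion N r)) := by
  intro v w hvw
  refine Set.disjoint_left.2 fun x hxv hxw => ?_
  obtain ⟨I, hI, rfl, hxI⟩ := mem_fiberUnion.1 hxv
  obtain ⟨J, hJ, rfl, hxJ⟩ := mem_fiberUnion.1 hxw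
  exact hvw (congrArg r (hN.elim_set hI hJ x hxI hxJ))

lemma pairwiseDisjoint_mergeFibers (hN : (N : Set (Set α)).PairwiseDisjoint id) :
    (mergeFibers N r : Set (Set α)).PairwiseDisjoint id := by
  rintro _ hS _ hT hST
  obtain ⟨v, -, rfl⟩ := Finset.mem_image.1 hS
  obtain ⟨w, -, rfl⟩ := Finset.mem_image.1 hT
  exact pairwise_disjoint_fiberUnion hN fun hvw => hST (hvw ▸ rfl)

lemma fiberUnion_prod_fiberUnion (v w : κ) :
    fiberUnion N r v ×ˢ fiberUnion N r w =
      ⋃ p ∈ (N ×ˢ N).filter (fun p => (r p.1, r p.2) = (v, w)), p.1 ×ˢ p.2 := by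
  ext ⟨x, y⟩
  simp only [Set.mem_prod, mem_fiberUnion, Set.mem_iUnion, Finset.mem_filter,
    Finset.mem_product, Prod.mk.injEq, Prod.exists]
  constructor
  · rintro ⟨⟨I, hI, hrI, hx⟩, ⟨J, hJ, hrJ, hy⟩⟩
    exact ⟨I, J, ⟨⟨hI, hJ⟩, hrI, hrJ⟩, hx, hy⟩
  · rintro ⟨I, J, ⟨⟨hI, hJ⟩, hrI, hrJ⟩, hx, hy⟩
    exact ⟨⟨I, hI, hrI, hx⟩, ⟨J, hJ, hrJ, hy⟩⟩

end MergeFibers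

lemma IsIntervalPartition.mergeFibers {κ : Type*} [DecidableEq κ] {N : Finset (Set ℝ)}
    (hN : IsIntervalPartition N) (r : Set ℝ → κ) : IsIntervalPartition (mergeFibers N r) := by
  refine ⟨fun S hS => ?_, pairwiseDisjoint_mergeFibers hN.2.1, biUnion_mergeFibers.trans hN.2.2⟩
  obtain ⟨v, -, rfl⟩ := Finset.mem_image.1 hS
  exact FinUnionIntervals.biUnion fun I hI => hN.1 I (Finset.mem_filter.1 hI).1

section MergeFibersLP

variable {κ : Type*} [DecidableEq κ] {N : Finset (Set ℝ)} {r : Set ℝ → κ}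

lemma ind_fiberUnion_prod_fiberUnion (hN : IsIntervalPartition N) (v w : κ) :
    ind (fiberUnion N r v ×ˢ fiberUnion N r w) =
      ∑ p ∈ (N ×ˢ N).filter (fun p => (r p.1, r p.2) = (v, w)), ind (p.1 ×ˢ p.2) := by
  rw [fiberUnion_prod_fiberUnion]
  exact ind_biUnion (fun p hp => hN.measurableSet_prod (Finset.mem_filter.1 hp).1)
    (fun p hp => hN.measure_prod_ne_top (Finset.mem_filter.1 hp).1)
    (hN.pairwiseDisjoint_prod.subset (Finset.coe_subset.2 (Finset.filter_subset _ _)))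

lemma LP_mergeFibers_le (hN : IsIntervalPartition N) : LP (mergeFibers N r) ≤ LP N := by
  rw [LP, Submodule.span_le]
  rintro _ ⟨_, hS, _, hT, rfl⟩
  obtain ⟨v, -, rfl⟩ := Finset.mem_image.1 hS
  obtain ⟨w, -, rfl⟩ := Finset.mem_image.1 hT
  rw [SetLike.mem_coe, ind_fiberUnion_prod_fiberUnion hN]
  refine Submodule.sum_mem _ fun p hp => Submodule.subset_span ?_
  obtain ⟨hI, hJ⟩ := Finset.mem_product.1 (Finset.mem_filter.1 hp).1
  exact ⟨p.1, hI, p.2, hJ, rfl⟩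

lemma sum_smul_ind_mem_LP_mergeFibers (hN : IsIntervalPartition N) (c : κ → κ → ℝ) :
    ∑ p ∈ N ×ˢ N, c (r p.1) (r p.2) • ind (p.1 ×ˢ p.2) ∈ LP (mergeFibers N r) := by
  rw [← Finset.sum_image' (g := fun p => (r p.1, r p.2))
    (f := fun u => c u.1 u.2 • ind (fiberUnion N r u.1 ×ˢ fiberUnion N r u.2))]
  · refine Submodule.sum_mem _ fun u hu => Submodule.smul_mem _ _ (Submodule.subset_span ?_)
    obtain ⟨p, hp, rfl⟩ := Finset.mem_image.1 hu
    obtain ⟨hI, hJ⟩ := Finset.mem_product.1 hp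
    exact ⟨_, fiberUnion_mem_mergeFibers hI, _, fiberUnion_mem_mergeFibers hJ, rfl⟩
  · intro p _
    rw [ind_fiberUnion_prod_fiberUnion hN, Finset.smul_sum]
    refine Finset.sum_congr rfl fun q hq => ?_
    obtain ⟨h₁, h₂⟩ := Prod.mk.inj (Finset.mem_filter.1 hq).2
    rw [h₁, h₂]

end MergeFibersLP

lemma norm_sum_smul_ind_lt {ι : Type*} {s : Finset ι} {S : ι → Set (ℝ × ℝ)}
    (hm : ∀ i ∈ s, MeasurableSet (S i)) (hf : ∀ i ∈ s, volume (S i) ≠ ⊤)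
    (hd : (s : Set ι).PairwiseDisjoint S) (hS : ∑ i ∈ s, volume.real (S i) = 1)
    {c : ι → ℝ} {ε : ℝ} (hc : ∀ i ∈ s, |c i| < ε) :
    ‖∑ i ∈ s, c i • ind (S i)‖ < ε := by
  obtain ⟨j, hj, hSj⟩ : ∃ j ∈ s, 0 < volume.real (S j) :=
    Finset.exists_lt_of_sum_lt (f := 0) (by simp [hS])
  have hε : 0 ≤ ε := (abs_nonneg _).trans (hc j hj).le
  refine lt_of_pow_lt_pow_left₀ 2 hε ?_
  rw [norm_sum_smul_ind_sq hm hf hd]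
  calc ∑ i ∈ s, c i ^ 2 * volume.real (S i) < ∑ i ∈ s, ε ^ 2 * volume.real (S i) :=
        Finset.sum_lt_sum
          (fun i hi => mul_le_mul_of_nonneg_right (sq_le_sq' (abs_lt.1 (hc i hi)).1.le
            (abs_lt.1 (hc i hi)).2.le) measureReal_nonneg)
          ⟨j, hj, mul_lt_mul_of_pos_right (sq_lt_sq' (abs_lt.1 (hc j hj)).1
            (abs_lt.1 (hc j hj)).2) hSj⟩
    _ = ε ^ 2 := by rw [← Finset.mul_sum, hS, mul_one]

lemma natFloor_div_mul_le {x δ : ℝ} (hx : 0 ≤ x) (hδ : 0 < δ) : (⌊x / δ⌋₊ : ℝ) * δ ≤ x :=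
  (le_div_iff₀ hδ).1 (Nat.floor_le (div_nonneg hx hδ.le))

lemma sub_natFloor_div_mul_lt (x : ℝ) {δ : ℝ} (hδ : 0 < δ) : x - ⌊x / δ⌋₊ * δ < δ := by
  have h := (div_lt_iff₀ hδ).1 (Nat.lt_floor_add_one (x / δ))
  linarith

lemma abs_mul_sub_natFloor_div_mul_lt {a b δ : ℝ} (ha₀ : 0 ≤ a) (ha₁ : a ≤ 1) (hb₀ : 0 ≤ b)
    (hb₁ : b ≤ 1) (hδ : 0 < δ) :
    |a * b - (⌊a / δ⌋₊ * δ) * (⌊b / δ⌋₊ * δ)| < δ + δ := by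
  have ha := natFloor_div_mul_le ha₀ hδ
  have hb := natFloor_div_mul_le hb₀ hδ
  have ha' := sub_natFloor_div_mul_lt a hδ
  have hb' := sub_natFloor_div_mul_lt b hδ
  have ha'₀ : (0 : ℝ) ≤ ⌊a / δ⌋₊ * δ := by positivity
  rw [abs_lt]
  constructor <;> nlinarith

lemma card_image_natFloor_div_le {ι : Type*} (s : Finset ι) {f g : ι → ℝ}
    (hf : ∀ i ∈ s, f i ≤ 1) (hg : ∀ i ∈ s, g i ≤ 1) {δ : ℝ} (hδ : 0 < δ) :
    ((s.image fun i => (⌊f i / δ⌋₊, ⌊g i / δ⌋₊)).card : ℝ) ≤ (1 + 1 / δ) ^ 2 := by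
  set n := ⌊1 / δ⌋₊
  have hfloor {x : ℝ} (hx : x ≤ 1) : ⌊x / δ⌋₊ ∈ Finset.range (n + 1) :=
    Finset.mem_range_succ_iff.2 (Nat.floor_le_floor (div_le_div_of_nonneg_right hx hδ.le))
  have hsub : s.image (fun i => (⌊f i / δ⌋₊, ⌊g i / δ⌋₊)) ⊆
      Finset.range (n + 1) ×ˢ Finset.range (n + 1) := by
    intro v hv
    obtain ⟨i, hi, rfl⟩ := Finset.mem_image.1 hv
    exact Finset.mem_product.2 ⟨hfloor (hf i hi), hfloor (hg i hi)⟩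
  have hn : (n : ℝ) ≤ 1 / δ := Nat.floor_le (by positivity)
  calc _ ≤ (((n + 1) ^ 2 : ℕ) : ℝ) := by
        have := Finset.card_le_card hsub
        rw [Finset.card_product, Finset.card_range, ← sq] at this
        exact_mod_cast this
    _ ≤ (1 + 1 / δ) ^ 2 := by push_cast; exact pow_le_pow_left₀ (by positivity) (by linarith) 2

theorem stmt12 (ε : ℝ) (hε : 0 < ε) (A B : Set ℝ)
    (hA : FinUnionIntervals A) (hB : FinUnionIntervals B)
    (hA1 : A ⊆ Icc (0 : ℝ) 1) (hB1 : B ⊆ Icc (0 : ℝ) 1)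
    (N : Finset (Set ℝ)) (hN : IsIntervalPartition N) :
    ∃ P : Finset (Set ℝ), IsIntervalPartition P ∧
      (∀ a ∈ N, ∃ b ∈ P, a ⊆ b) ∧
      ((P.card : ℝ) ≤ (1 + 2 / ε) ^ 2) ∧
      ∀ xN xP, IsProj (LP N) (ind (A ×ˢ B)) xN → IsProj (LP P) (ind (A ×ˢ B)) xP →
        ‖xN - xP‖ < ε := by
  have hδ : 0 < ε / 2 := half_pos hε
  have hα₁ I (hI : I ∈ N) : relMeasure A I ≤ 1 := relMeasure_le_one A (hN.measure_ne_top hI)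
  have hβ₁ I (hI : I ∈ N) : relMeasure B I ≤ 1 := relMeasure_le_one B (hN.measure_ne_top hI)
  let r I : ℕ × ℕ := (⌊relMeasure A I / (ε / 2)⌋₊, ⌊relMeasure B I / (ε / 2)⌋₊)
  refine ⟨mergeFibers N r, hN.mergeFibers r,
    fun I hI => ⟨_, fiberUnion_mem_mergeFibers hI, subset_fiberUnion hI⟩, ?_,
    fun xN xP hxN hxP => ?_⟩
  · calc ((mergeFibers N r).card : ℝ) ≤ (N.image r).card := by
          exact_mod_cast card_mergeFibers_le
      _ ≤ (1 + 2 / ε) ^ 2 := by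
          simpa only [one_div_div] using card_image_natFloor_div_le N hα₁ hβ₁ hδ
  have hxN_eq := hxN.unique (isProj_ind_prod hA.measurableSet
    (measure_ne_top_of_subset hA1 (by simp)) hB.measurableSet
    (measure_ne_top_of_subset hB1 (by simp)) hN)
  have hy := sum_smul_ind_mem_LP_mergeFibers hN (r := r)
    fun v w => ((v.1 : ℝ) * (ε / 2)) * ((w.2 : ℝ) * (ε / 2))
  calc ‖xN - xP‖ ≤ ‖xN - _‖ := hxN.norm_sub_le (LP_mergeFibers_le hN) hxP hy
    _ < ε := by
      rw [hxN_eq, ← Finset.sum_sub_distrib]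
      simp_rw [← sub_smul]
      refine norm_sum_smul_ind_lt (fun _ => hN.measurableSet_prod)
        (fun _ => hN.measure_prod_ne_top) hN.pairwiseDisjoint_prod hN.sum_measureReal_prod
        fun p hp => ?_
      obtain ⟨hI, hJ⟩ := Finset.mem_product.1 hp
      simpa only [add_halves] using abs_mul_sub_natFloor_div_mul_lt (relMeasure_nonneg A p.1)
        (hα₁ _ hI) (relMeasure_nonneg B p.2) (hβ₁ _ hJ) hδ
end
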